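/- arXiv:1403.3909 — 9 statements merged into one kernel-verified Lean document; each statement's English description precedes it below -/
import Mathlib

section
/- Let J be a nonempty finite set of indices with maximum element m. Then the conditional expectation of Ŝ(J) given ℱ_{m−1} equals Ŝ(J \ {m}) almost surely. -/
/-!
Writing `m = max J`, the product splits as `Ŝ(J) = (Ŝ(J \ {m}) / p_m) · H_m`. The first factor is
`ℱ_{m-1}`-measurable and bounded (by `c^{-|J|}`, since `p_i ≥ c`), so it can be pulled out of the
conditional expectation, leaving `(Ŝ(J \ {m}) / p_m) · μ[H_m | ℱ_{m-1}] = Ŝ(J \ {m})`.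
-/

open MeasureTheory Finset

lemma abs_div_le_inv_of_abs_le_one {h p c : ℝ} (hc : 0 < c) (hh : |h| ≤ 1) (hp : c ≤ p) :
    |h / p| ≤ c⁻¹ := by
  rw [abs_div, abs_of_pos (hc.trans_le hp), div_le_iff₀ (hc.trans_le hp)]
  calc |h| ≤ 1 := hh
    _ = c⁻¹ * c := (inv_mul_cancel₀ hc.ne').symm
    _ ≤ c⁻¹ * p := by gcongr

lemma abs_le_one_of_eq_zero_or_eq_one {h : ℝ} (hh : h = 0 ∨ h = 1) : |h| ≤ 1 := by
  rcases hh with rfl | rfl <;> simp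

section

variable {Ω ι : Type*} {m0 : MeasurableSpace Ω} {μ : Measure Ω}

lemma ae_abs_prod_le_pow (S : Finset ι) (f : ι → Ω → ℝ) {C : ℝ}
    (hf : ∀ i ∈ S, ∀ᵐ ω ∂μ, |f i ω| ≤ C) : ∀ᵐ ω ∂μ, |∏ i ∈ S, f i ω| ≤ C ^ S.card := by
  filter_upwards [(Filter.eventually_all_finset S).2 hf] with ω hω
  rw [abs_prod, ← prod_const]
  exact prod_le_prod (fun i _ => abs_nonneg _) hω

lemma measurable_prod_div_of_le (ℱ : Filtration ℕ m0) (H p : ℕ → Ω → ℝ) {S : Finset ℕ} {n : ℕ}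
    (hSn : ∀ i ∈ S, i ≤ n) (hH : ∀ i ∈ S, Measurable[ℱ i] (H i))
    (hp : ∀ i ∈ S, Measurable[ℱ (i - 1)] (p i)) :
    Measurable[ℱ n] fun ω => ∏ i ∈ S, H i ω / p i ω :=
  Finset.measurable_prod _ fun i hi =>
    ((hH i hi).mono (ℱ.mono (hSn i hi)) le_rfl).div
      ((hp i hi).mono (ℱ.mono ((i.sub_le 1).trans (hSn i hi))) le_rfl)

lemma condExp_div_mul_ae_eq_of_condExp_ae_eq {m : MeasurableSpace Ω} (hm : m ≤ m0)
    [IsFiniteMeasure μ] {Y q h : Ω → ℝ} {C c : ℝ} (hc : 0 < c)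
    (hY : Measurable[m] Y) (hq : Measurable[m] q) (hYC : ∀ᵐ ω ∂μ, |Y ω| ≤ C)
    (hqc : ∀ᵐ ω ∂μ, c ≤ q ω) (hh : Integrable h μ) (hhq : μ[h | m] =ᵐ[μ] q) :
    μ[Y / q * h | m] =ᵐ[μ] Y := by
  have hYq_bound : ∀ᵐ ω ∂μ, ‖Y ω / q ω‖ ≤ C * c⁻¹ := by
    filter_upwards [hYC, hqc] with ω hYω hqω
    rw [Real.norm_eq_abs, div_eq_mul_one_div, abs_mul]
    exact mul_le_mul hYω (abs_div_le_inv_of_abs_le_one hc (by simp) hqω) (abs_nonneg _)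
      ((abs_nonneg _).trans hYω)
  filter_upwards [condExp_stronglyMeasurable_mul_of_bound hm (hY.div hq).stronglyMeasurable hh _
    hYq_bound, hhq, hqc] with ω hpull hhqω hqω
  rw [hpull, Pi.mul_apply, hhqω, Pi.div_apply, div_mul_cancel₀ _ (hc.trans_le hqω).ne']

end

theorem stmt2_general {Ω : Type*} {m0 : MeasurableSpace Ω} {μ : Measure Ω}
    [IsProbabilityMeasure μ] (ℱ : Filtration ℕ m0)
    (c : ℝ) (hc0 : 0 < c)
    (H p : ℕ → Ω → ℝ)
    (hHmeas : ∀ i, 1 ≤ i → Measurable[ℱ i] (H i))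
    (hH01 : ∀ i, 1 ≤ i → ∀ ω, H i ω = 0 ∨ H i ω = 1)
    (hpmeas : ∀ i, 1 ≤ i → Measurable[ℱ (i - 1)] (p i))
    (hpb : ∀ i, 1 ≤ i → ∀ᵐ ω ∂μ, c ≤ p i ω ∧ p i ω ≤ 1)
    (hcond : ∀ i, 1 ≤ i → μ[H i | ℱ (i - 1)] =ᵐ[μ] p i)
    (J : Finset ℕ) (hJne : J.Nonempty) (hJ1 : ∀ i ∈ J, 1 ≤ i) :
    μ[fun ω => ∏ i ∈ J, H i ω / p i ω | ℱ (J.max' hJne - 1)]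
      =ᵐ[μ] fun ω => ∏ i ∈ J.erase (J.max' hJne), H i ω / p i ω := by
  set m := J.max' hJne
  have hm : 1 ≤ m := hJ1 m (J.max'_mem hJne)
  set Y : Ω → ℝ := fun ω => ∏ i ∈ J.erase m, H i ω / p i ω
  have hsplit : (fun ω => ∏ i ∈ J, H i ω / p i ω) = Y / p m * H m := by
    ext ω
    rw [← prod_erase_mul J _ (J.max'_mem hJne), Pi.mul_apply, Pi.div_apply, div_mul_eq_mul_div, mul_div_assoc]
  have hY_meas : Measurable[ℱ (m - 1)] Y :=
    measurable_prod_div_of_le ℱ H p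
      (fun i hi => Nat.le_sub_one_of_lt (J.lt_max'_of_mem_erase_max' hJne hi))
      (fun i hi => hHmeas i (hJ1 i (mem_of_mem_erase hi)))
      (fun i hi => hpmeas i (hJ1 i (mem_of_mem_erase hi)))
  have hY_bound : ∀ᵐ ω ∂μ, |Y ω| ≤ c⁻¹ ^ (J.erase m).card :=
    ae_abs_prod_le_pow _ _ fun i hi => by
      have hi1 := hJ1 i (mem_of_mem_erase hi)
      filter_upwards [hpb i hi1] with ω hω
      exact abs_div_le_inv_of_abs_le_one hc0 (abs_le_one_of_eq_zero_or_eq_one (hH01 i hi1 ω)) hω.1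
  have hH_int : Integrable (H m) μ :=
    Integrable.of_bound ((hHmeas m hm).mono (ℱ.le m) le_rfl).aestronglyMeasurable 1
      (ae_of_all _ fun ω => abs_le_one_of_eq_zero_or_eq_one (hH01 m hm ω))
  rw [hsplit]
  exact condExp_div_mul_ae_eq_of_condExp_ae_eq (ℱ.le _) hc0 hY_meas (hpmeas m hm) hY_bound
    ((hpb m hm).mono fun ω hω => hω.1) hH_int (hcond m hm)

theorem stmt2 {Ω : Type*} {m0 : MeasurableSpace Ω} {μ : Measure Ω}
    [IsProbabilityMeasure μ] (ℱ : Filtration ℕ m0)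
    (c : ℝ) (hc0 : 0 < c) (hc1 : c ≤ 1)
    (H p : ℕ → Ω → ℝ)
    (hHmeas : ∀ i, 1 ≤ i → Measurable[ℱ i] (H i))
    (hH01 : ∀ i, 1 ≤ i → ∀ ω, H i ω = 0 ∨ H i ω = 1)
    (hpmeas : ∀ i, 1 ≤ i → Measurable[ℱ (i - 1)] (p i))
    (hpb : ∀ i, 1 ≤ i → ∀ᵐ ω ∂μ, c ≤ p i ω ∧ p i ω ≤ 1)
    (hcond : ∀ i, 1 ≤ i → μ[H i | ℱ (i - 1)] =ᵐ[μ] p i)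
    (J : Finset ℕ) (hJne : J.Nonempty) (hJ1 : ∀ i ∈ J, 1 ≤ i) :
    μ[fun ω => ∏ i ∈ J, H i ω / p i ω | ℱ (J.max' hJne - 1)]
      =ᵐ[μ] fun ω => ∏ i ∈ J.erase (J.max' hJne), H i ω / p i ω :=
  stmt2_general ℱ c hc0 H p hHmeas hH01 hpmeas hpb hcond J hJne hJ1
end

section
/- For every finite set J of indices, the expectation of the product selection estimator satisfies E[Ŝ(J)] = 1. -/
/-!
Peel off the largest index `a` of `J`. Every other factor of `Ŝ(J)`, and `p_a`, is
`ℱ_{a-1}`-measurable, so conditioning on `ℱ_{a-1}` replaces `H_a` by `p_a` in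
`E[Ŝ(J \ {a}) · H_a / p_a]`, leaving `E[Ŝ(J \ {a})]`; induct down to `Ŝ(∅) = 1`.
-/

open MeasureTheory Finset

section

variable {Ω : Type*} {m0 : MeasurableSpace Ω} {μ : Measure Ω}

theorem memLp_top_of_forall_eq_zero_or_eq_one {H : Ω → ℝ} (hH : AEStronglyMeasurable H μ)
    (h01 : ∀ ω, H ω = 0 ∨ H ω = 1) : MemLp H ⊤ μ :=
  memLp_top_of_bound hH 1 <| .of_forall fun ω => by rcases h01 ω with h | h <;> simp [h]

theorem memLp_top_div_of_le {H p : Ω → ℝ} {c : ℝ} (hH : MemLp H ⊤ μ) (hc : 0 < c)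
    (hp : AEMeasurable p μ) (hpc : ∀ᵐ ω ∂μ, c ≤ p ω) : MemLp (fun ω => H ω / p ω) ⊤ μ := by
  have hinv : MemLp (fun ω => (p ω)⁻¹) ⊤ μ :=
    memLp_top_of_bound hp.inv.aestronglyMeasurable c⁻¹ <| hpc.mono fun ω h => by
      rw [norm_inv, Real.norm_of_nonneg (hc.le.trans h)]
      exact inv_anti₀ hc h
  exact hinv.mul hH

theorem integral_mul_div_eq_of_condExp_eq {m : MeasurableSpace Ω} (hm : m ≤ m0)
    [SigmaFinite (μ.trim hm)] {X H p : Ω → ℝ} (hX : StronglyMeasurable[m] X)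
    (hp : StronglyMeasurable[m] p) (hp0 : ∀ᵐ ω ∂μ, p ω ≠ 0) (hH : Integrable H μ)
    (hXH : Integrable (fun ω => X ω * (H ω / p ω)) μ) (hcond : μ[H | m] =ᵐ[μ] p) :
    ∫ ω, X ω * (H ω / p ω) ∂μ = ∫ ω, X ω ∂μ := by
  have hXH_eq : (fun ω => X ω * (H ω / p ω)) = X / p * H := by
    ext ω
    simp only [Pi.mul_apply, Pi.div_apply]
    ring
  rw [hXH_eq] at hXH ⊢
  calc ∫ ω, (X / p * H) ω ∂μ = ∫ ω, (μ[X / p * H | m]) ω ∂μ := (integral_condExp hm).symm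
    _ = ∫ ω, (X / p * p) ω ∂μ := integral_congr_ae <|
        (condExp_mul_of_stronglyMeasurable_left (hX.div hp) hXH hH).trans
          (hcond.mono fun ω h => by simp only [Pi.mul_apply, h])
    _ = ∫ ω, X ω ∂μ := integral_congr_ae <| hp0.mono fun ω h => div_mul_cancel₀ (X ω) h

end

theorem stmt3_general {Ω : Type*} {m0 : MeasurableSpace Ω} {μ : Measure Ω}
    [IsProbabilityMeasure μ] (ℱ : Filtration ℕ m0)
    (c : ℝ) (hc0 : 0 < c)
    (H p : ℕ → Ω → ℝ)
    (hHmeas : ∀ i, 1 ≤ i → Measurable[ℱ i] (H i))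
    (hH01 : ∀ i, 1 ≤ i → ∀ ω, H i ω = 0 ∨ H i ω = 1)
    (hpmeas : ∀ i, 1 ≤ i → Measurable[ℱ (i - 1)] (p i))
    (hpb : ∀ i, 1 ≤ i → ∀ᵐ ω ∂μ, c ≤ p i ω ∧ p i ω ≤ 1)
    (hcond : ∀ i, 1 ≤ i → μ[H i | ℱ (i - 1)] =ᵐ[μ] p i)
    (J : Finset ℕ) (hJ1 : ∀ i ∈ J, 1 ≤ i) :
    ∫ ω, ∏ i ∈ J, H i ω / p i ω ∂μ = 1 := by
  induction J using Finset.induction_on_max with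
  | empty => simp
  | insert a s hlt ih =>
    have ha : 1 ≤ a := hJ1 a (mem_insert_self a s)
    have hs : ∀ i ∈ s, 1 ≤ i := fun i hi => hJ1 i (mem_insert_of_mem hi)
    have hH : ∀ i, 1 ≤ i → MemLp (H i) ⊤ μ := fun i hi =>
      memLp_top_of_forall_eq_zero_or_eq_one
        ((hHmeas i hi).mono (ℱ.le i) le_rfl).aestronglyMeasurable (hH01 i hi)
    have hint : Integrable (fun ω => ∏ i ∈ insert a s, H i ω / p i ω) μ :=
      (MemLp.prod' fun i hi => memLp_top_div_of_le (hH i (hJ1 i hi)) hc0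
        ((hpmeas i (hJ1 i hi)).mono (ℱ.le _) le_rfl).aemeasurable
        ((hpb i (hJ1 i hi)).mono fun _ h => h.1)).integrable (by simp)
    have hprefix : StronglyMeasurable[ℱ (a - 1)] fun ω => ∏ i ∈ s, H i ω / p i ω := by
      refine (Finset.measurable_prod s fun i hi => .div ?_ ?_).stronglyMeasurable
      · exact (hHmeas i (hs i hi)).mono (ℱ.mono (Nat.le_sub_one_of_lt (hlt i hi))) le_rfl
      · exact (hpmeas i (hs i hi)).mono (ℱ.mono (by have := hlt i hi; omega)) le_rfl
    simp_rw [prod_insert (fun has => (hlt a has).false), mul_comm (H a _ / p a _)] at hint ⊢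
    rw [← ih hs]
    exact integral_mul_div_eq_of_condExp_eq (ℱ.le _) hprefix (hpmeas a ha).stronglyMeasurable
      ((hpb a ha).mono fun _ h => (hc0.trans_le h.1).ne') ((hH a ha).integrable le_top) hint
      (hcond a ha)

theorem stmt3 {Ω : Type*} {m0 : MeasurableSpace Ω} {μ : Measure Ω}
    [IsProbabilityMeasure μ] (ℱ : Filtration ℕ m0)
    (c : ℝ) (hc0 : 0 < c) (hc1 : c ≤ 1)
    (H p : ℕ → Ω → ℝ)
    (hHmeas : ∀ i, 1 ≤ i → Measurable[ℱ i] (H i))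
    (hH01 : ∀ i, 1 ≤ i → ∀ ω, H i ω = 0 ∨ H i ω = 1)
    (hpmeas : ∀ i, 1 ≤ i → Measurable[ℱ (i - 1)] (p i))
    (hpb : ∀ i, 1 ≤ i → ∀ᵐ ω ∂μ, c ≤ p i ω ∧ p i ω ≤ 1)
    (hcond : ∀ i, 1 ≤ i → μ[H i | ℱ (i - 1)] =ᵐ[μ] p i)
    (J : Finset ℕ) (hJ1 : ∀ i ∈ J, 1 ≤ i) :
    ∫ ω, ∏ i ∈ J, H i ω / p i ω ∂μ = 1 :=
  stmt3_general ℱ c hc0 H p hHmeas hH01 hpmeas hpb hcond J hJ1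
end

section
/- If J and J' are disjoint finite sets of indices, then E[Ŝ(J) · Ŝ(J')] = 1. -/
/-!
Order the indices of `J ∪ J'` and peel off the largest one, `a`. The product over the remaining
indices, divided by `p a`, is bounded and `ℱ (a - 1)`-measurable, so it can be pulled out of the
conditional expectation of `H a` given `ℱ (a - 1)`, which is `p a`; this cancels the division and
the expectation reduces to that over the smaller index set.
-/

open MeasureTheory Finset

section CondExp

variable {Ω : Type*} {m m0 : MeasurableSpace Ω} {μ : Measure Ω} [IsFiniteMeasure μ]

theorem integral_mul_eq_integral_mul_condExp_of_bound (hm : m ≤ m0) {f g : Ω → ℝ}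
    (hf : StronglyMeasurable[m] f) (hg : Integrable g μ) (C : ℝ) (hfC : ∀ᵐ ω ∂μ, ‖f ω‖ ≤ C) :
    ∫ ω, f ω * g ω ∂μ = ∫ ω, f ω * μ[g | m] ω ∂μ :=
  (integral_condExp hm).symm.trans
    (integral_congr_ae (condExp_stronglyMeasurable_mul_of_bound hm hf hg C hfC))

theorem integral_mul_div_eq_of_condExp_eq_s4 (hm : m ≤ m0) {F X p : Ω → ℝ} {c C : ℝ} (hc : 0 < c)
    (hF : Measurable[m] F) (hFC : ∀ᵐ ω ∂μ, |F ω| ≤ C) (hp : Measurable[m] p)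
    (hpc : ∀ᵐ ω ∂μ, c ≤ p ω) (hX : Integrable X μ) (hXp : μ[X | m] =ᵐ[μ] p) :
    ∫ ω, F ω * (X ω / p ω) ∂μ = ∫ ω, F ω ∂μ := by
  have hbound : ∀ᵐ ω ∂μ, ‖F ω / p ω‖ ≤ C / c := by
    filter_upwards [hFC, hpc] with ω hFω hpω
    rw [Real.norm_eq_abs, abs_div, abs_of_pos (hc.trans_le hpω)]
    exact div_le_div₀ ((abs_nonneg _).trans hFω) hFω hc hpω
  calc ∫ ω, F ω * (X ω / p ω) ∂μ = ∫ ω, F ω / p ω * X ω ∂μ := by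
        congr with ω; ring
    _ = ∫ ω, F ω / p ω * μ[X | m] ω ∂μ :=
        integral_mul_eq_integral_mul_condExp_of_bound hm (hF.div hp).stronglyMeasurable hX _ hbound
    _ = ∫ ω, F ω ∂μ := by
        refine integral_congr_ae ?_
        filter_upwards [hXp, hpc] with ω hXω hpω
        rw [hXω, div_mul_cancel₀ _ (hc.trans_le hpω).ne']

end CondExp

theorem abs_prod_div_le_inv_pow {ι : Type*} (K : Finset ι) {x y : ι → ℝ} {c : ℝ} (hc : 0 < c)
    (hx : ∀ i ∈ K, |x i| ≤ 1) (hy : ∀ i ∈ K, c ≤ y i) :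
    |∏ i ∈ K, x i / y i| ≤ c⁻¹ ^ #K := by
  rw [abs_prod, ← prod_const]
  refine prod_le_prod (fun _ _ => abs_nonneg _) fun i hi => ?_
  rw [abs_div, abs_of_pos (hc.trans_le (hy i hi)), ← one_div]
  exact div_le_div₀ zero_le_one (hx i hi) hc (hy i hi)

theorem integral_prod_div_eq_one {Ω : Type*} {m0 : MeasurableSpace Ω} {μ : Measure Ω}
    [IsProbabilityMeasure μ] (ℱ : Filtration ℕ m0) {c : ℝ} (hc : 0 < c) (H p : ℕ → Ω → ℝ)
    (hHmeas : ∀ i, 1 ≤ i → Measurable[ℱ i] (H i)) (hH : ∀ i, 1 ≤ i → ∀ ω, |H i ω| ≤ 1)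
    (hpmeas : ∀ i, 1 ≤ i → Measurable[ℱ (i - 1)] (p i)) (hpc : ∀ i, 1 ≤ i → ∀ᵐ ω ∂μ, c ≤ p i ω)
    (hcond : ∀ i, 1 ≤ i → μ[H i | ℱ (i - 1)] =ᵐ[μ] p i)
    (K : Finset ℕ) (hK : ∀ i ∈ K, 1 ≤ i) :
    ∫ ω, ∏ i ∈ K, H i ω / p i ω ∂μ = 1 := by
  induction K using Finset.induction_on_max with
  | empty => simp
  | insert a s hlt ih =>
    have ha : 1 ≤ a := hK a (mem_insert_self a s)
    have hs : ∀ i ∈ s, 1 ≤ i := fun i hi => hK i (mem_insert_of_mem hi)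
    have hF : Measurable[ℱ (a - 1)] fun ω => ∏ i ∈ s, H i ω / p i ω :=
      Finset.measurable_prod _ fun i hi =>
        ((hHmeas i (hs i hi)).mono (ℱ.mono (by grind)) le_rfl).div
          ((hpmeas i (hs i hi)).mono (ℱ.mono (by grind)) le_rfl)
    have hFC : ∀ᵐ ω ∂μ, |∏ i ∈ s, H i ω / p i ω| ≤ c⁻¹ ^ #s := by
      filter_upwards [(ae_ball_iff s.countable_toSet).2 fun i hi => hpc i (hs i hi)] with ω hω
      exact abs_prod_div_le_inv_pow s hc (fun i hi => hH i (hs i hi) ω) hω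
    have hHa : Integrable (H a) μ :=
      .of_bound ((hHmeas a ha).mono (ℱ.le a) le_rfl).aestronglyMeasurable 1
        (.of_forall fun ω => hH a ha ω)
    rw [← ih hs, ← integral_mul_div_eq_of_condExp_eq_s4 (ℱ.le (a - 1)) hc hF hFC (hpmeas a ha)
      (hpc a ha) hHa (hcond a ha)]
    congr with ω
    rw [prod_insert (fun h => (hlt a h).false), mul_comm]

theorem stmt4_general {Ω : Type*} {m0 : MeasurableSpace Ω} {μ : Measure Ω}
    [IsProbabilityMeasure μ] (ℱ : Filtration ℕ m0)
    (c : ℝ) (hc0 : 0 < c)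
    (H p : ℕ → Ω → ℝ)
    (hHmeas : ∀ i, 1 ≤ i → Measurable[ℱ i] (H i))
    (hH01 : ∀ i, 1 ≤ i → ∀ ω, H i ω = 0 ∨ H i ω = 1)
    (hpmeas : ∀ i, 1 ≤ i → Measurable[ℱ (i - 1)] (p i))
    (hpb : ∀ i, 1 ≤ i → ∀ᵐ ω ∂μ, c ≤ p i ω ∧ p i ω ≤ 1)
    (hcond : ∀ i, 1 ≤ i → μ[H i | ℱ (i - 1)] =ᵐ[μ] p i)
    (J J' : Finset ℕ) (hJ1 : ∀ i ∈ J, 1 ≤ i) (hJ'1 : ∀ i ∈ J', 1 ≤ i)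
    (hdisj : Disjoint J J') :
    ∫ ω, (∏ i ∈ J, H i ω / p i ω) * (∏ i ∈ J', H i ω / p i ω) ∂μ = 1 := by
  have hH : ∀ i, 1 ≤ i → ∀ ω, |H i ω| ≤ 1 := fun i hi ω => by
    rcases hH01 i hi ω with h | h <;> simp [h]
  simp_rw [← prod_union hdisj]
  exact integral_prod_div_eq_one ℱ hc0 H p hHmeas hH hpmeas
    (fun i hi => (hpb i hi).mono fun _ h => h.1) hcond _
    (fun i hi => (mem_union.1 hi).elim (hJ1 i) (hJ'1 i))

theorem stmt4 {Ω : Type*} {m0 : MeasurableSpace Ω} {μ : Measure Ω}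
    [IsProbabilityMeasure μ] (ℱ : Filtration ℕ m0)
    (c : ℝ) (hc0 : 0 < c) (hc1 : c ≤ 1)
    (H p : ℕ → Ω → ℝ)
    (hHmeas : ∀ i, 1 ≤ i → Measurable[ℱ i] (H i))
    (hH01 : ∀ i, 1 ≤ i → ∀ ω, H i ω = 0 ∨ H i ω = 1)
    (hpmeas : ∀ i, 1 ≤ i → Measurable[ℱ (i - 1)] (p i))
    (hpb : ∀ i, 1 ≤ i → ∀ᵐ ω ∂μ, c ≤ p i ω ∧ p i ω ≤ 1)
    (hcond : ∀ i, 1 ≤ i → μ[H i | ℱ (i - 1)] =ᵐ[μ] p i)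
    (J J' : Finset ℕ) (hJ1 : ∀ i ∈ J, 1 ≤ i) (hJ'1 : ∀ i ∈ J', 1 ≤ i)
    (hdisj : Disjoint J J') :
    ∫ ω, (∏ i ∈ J, H i ω / p i ω) * (∏ i ∈ J', H i ω / p i ω) ∂μ = 1 :=
  stmt4_general ℱ c hc0 H p hHmeas hH01 hpmeas hpb hcond J J' hJ1 hJ'1 hdisj
end

section
/- If J and J' are disjoint finite sets of indices, then the covariance of Ŝ(J) and Ŝ(J') is zero, i.e. Cov(Ŝ(J), Ŝ(J')) = 0. -/
/-!
Dividing each selection indicator `H_i` by its conditional inclusion probability `p_i` makes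
`Ŝ(J)` have mean one: peeling off the largest index `a ∈ J`, the rest of the product is
`ℱ_{a-1}`-measurable, so conditioning on `ℱ_{a-1}` replaces `H_a` by `p_a`, which cancels.
For disjoint `J`, `J'` we have `Ŝ(J) Ŝ(J') = Ŝ(J ∪ J')`, so `E[Ŝ(J) Ŝ(J')] = 1 = E[Ŝ(J)] E[Ŝ(J')]`.
-/

open MeasureTheory ProbabilityTheory Finset
open scoped ENNReal

noncomputable def selectionEstimator {Ω : Type*} (H p : ℕ → Ω → ℝ) (J : Finset ℕ) (ω : Ω) : ℝ :=
  ∏ i ∈ J, H i ω / p i ω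

section

variable {Ω : Type*} {m0 : MeasurableSpace Ω} {μ : Measure Ω} {H p : ℕ → Ω → ℝ}

lemma abs_div_le_inv_of_abs_le_one_s5 {x y c : ℝ} (hc : 0 < c) (hx : |x| ≤ 1) (hy : c ≤ y) :
    |x / y| ≤ c⁻¹ := by
  rw [abs_div, inv_eq_one_div]
  exact div_le_div₀ zero_le_one hx hc (hy.trans (le_abs_self y))

theorem memLp_selectionEstimator [IsFiniteMeasure μ] {c : ℝ} (hc : 0 < c) {K : Finset ℕ}
    (hH : ∀ i ∈ K, Measurable (H i)) (hH1 : ∀ i ∈ K, ∀ ω, |H i ω| ≤ 1)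
    (hp : ∀ i ∈ K, Measurable (p i)) (hpc : ∀ i ∈ K, ∀ᵐ ω ∂μ, c ≤ p i ω) (q : ℝ≥0∞) :
    MemLp (selectionEstimator H p K) q μ := by
  refine .of_bound (measurable_prod K fun i hi => (hH i hi).div (hp i hi)).aestronglyMeasurable
    (c⁻¹ ^ K.card) ?_
  filter_upwards [(ae_ball_iff K.countable_toSet).mpr hpc] with ω hω
  rw [Real.norm_eq_abs, selectionEstimator, abs_prod, ← prod_const]
  exact prod_le_prod (fun _ _ => abs_nonneg _) fun i hi =>
    abs_div_le_inv_of_abs_le_one_s5 hc (hH1 i hi ω) (hω i hi)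

theorem measurable_selectionEstimator (ℱ : Filtration ℕ m0) {K : Finset ℕ} {n : ℕ}
    (hH : ∀ i ∈ K, Measurable[ℱ i] (H i)) (hp : ∀ i ∈ K, Measurable[ℱ i] (p i))
    (hK : ∀ i ∈ K, i ≤ n) :
    Measurable[ℱ n] (selectionEstimator H p K) :=
  measurable_prod K fun i hi =>
    ((hH i hi).mono (ℱ.mono (hK i hi)) le_rfl).div ((hp i hi).mono (ℱ.mono (hK i hi)) le_rfl)

theorem integral_mul_eq_integral_mul_of_condExp_eq {m : MeasurableSpace Ω} (hm : m ≤ m0)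
    [SigmaFinite (μ.trim hm)] {f g q : Ω → ℝ} (hf : StronglyMeasurable[m] f)
    (hfg : Integrable (f * g) μ) (hg : Integrable g μ) (hq : μ[g | m] =ᵐ[μ] q) :
    ∫ ω, f ω * g ω ∂μ = ∫ ω, f ω * q ω ∂μ :=
  calc ∫ ω, f ω * g ω ∂μ = ∫ ω, μ[f * g | m] ω ∂μ := (integral_condExp hm).symm
    _ = ∫ ω, f ω * q ω ∂μ := integral_congr_ae <|
      (condExp_mul_of_stronglyMeasurable_left hf hfg hg).trans (hq.mono fun ω h => by simp [h])

theorem integral_selectionEstimator [IsProbabilityMeasure μ] (ℱ : Filtration ℕ m0) {c : ℝ}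
    (hc : 0 < c) (hHmeas : ∀ i, 1 ≤ i → Measurable[ℱ i] (H i))
    (hH1 : ∀ i, 1 ≤ i → ∀ ω, |H i ω| ≤ 1)
    (hpmeas : ∀ i, 1 ≤ i → Measurable[ℱ (i - 1)] (p i))
    (hpc : ∀ i, 1 ≤ i → ∀ᵐ ω ∂μ, c ≤ p i ω)
    (hcond : ∀ i, 1 ≤ i → μ[H i | ℱ (i - 1)] =ᵐ[μ] p i) {K : Finset ℕ} (hK : ∀ i ∈ K, 1 ≤ i) :
    ∫ ω, selectionEstimator H p K ω ∂μ = 1 := by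
  induction K using Finset.induction_on_max with
  | empty => simp [selectionEstimator]
  | insert a s has ih =>
    have ha : 1 ≤ a := hK a (mem_insert_self a s)
    have hs : ∀ i ∈ s, 1 ≤ i := fun i hi => hK i (mem_insert_of_mem hi)
    set g := fun ω => selectionEstimator H p s ω * (p a ω)⁻¹
    have hg : StronglyMeasurable[ℱ (a - 1)] g :=
      ((measurable_selectionEstimator ℱ (fun i hi => hHmeas i (hs i hi))
        (fun i hi => (hpmeas i (hs i hi)).mono (ℱ.mono (Nat.sub_le i 1)) le_rfl)
        fun i hi => Nat.le_sub_one_of_lt (has i hi)).mul (hpmeas a ha).inv).stronglyMeasurable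
    have hsplit : selectionEstimator H p (insert a s) = g * H a := by
      funext ω
      simp only [selectionEstimator, prod_insert fun h => (has a h).false, g, Pi.mul_apply]
      ring
    have hint : Integrable (selectionEstimator H p (insert a s)) μ :=
      (memLp_selectionEstimator hc (fun i hi => (hHmeas i (hK i hi)).mono (ℱ.le i) le_rfl)
        (fun i hi => hH1 i (hK i hi)) (fun i hi => (hpmeas i (hK i hi)).mono (ℱ.le _) le_rfl)
        (fun i hi => hpc i (hK i hi)) 1).integrable le_rfl
    have hHint : Integrable (H a) μ :=
      .of_bound ((hHmeas a ha).mono (ℱ.le a) le_rfl).aestronglyMeasurable 1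
        (.of_forall fun ω => hH1 a ha ω)
    calc ∫ ω, selectionEstimator H p (insert a s) ω ∂μ = ∫ ω, g ω * H a ω ∂μ := by rw [hsplit]; rfl
      _ = ∫ ω, g ω * p a ω ∂μ :=
        integral_mul_eq_integral_mul_of_condExp_eq (ℱ.le _) hg (hsplit ▸ hint) hHint (hcond a ha)
      _ = ∫ ω, selectionEstimator H p s ω ∂μ := integral_congr_ae <| (hpc a ha).mono fun ω hω => by
        simp only [g, mul_assoc, inv_mul_cancel₀ (hc.trans_le hω).ne', mul_one]
      _ = 1 := ih hs

end

theorem stmt5_general {Ω : Type*} {m0 : MeasurableSpace Ω} {μ : Measure Ω}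
    [IsProbabilityMeasure μ] (ℱ : Filtration ℕ m0)
    (c : ℝ) (hc0 : 0 < c)
    (H p : ℕ → Ω → ℝ)
    (hHmeas : ∀ i, 1 ≤ i → Measurable[ℱ i] (H i))
    (hH01 : ∀ i, 1 ≤ i → ∀ ω, H i ω = 0 ∨ H i ω = 1)
    (hpmeas : ∀ i, 1 ≤ i → Measurable[ℱ (i - 1)] (p i))
    (hpb : ∀ i, 1 ≤ i → ∀ᵐ ω ∂μ, c ≤ p i ω ∧ p i ω ≤ 1)
    (hcond : ∀ i, 1 ≤ i → μ[H i | ℱ (i - 1)] =ᵐ[μ] p i)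
    (J J' : Finset ℕ) (hJ1 : ∀ i ∈ J, 1 ≤ i) (hJ'1 : ∀ i ∈ J', 1 ≤ i)
    (hdisj : Disjoint J J') :
    ∫ ω, ((∏ i ∈ J, H i ω / p i ω) - ∫ ω', ∏ i ∈ J, H i ω' / p i ω' ∂μ)
        * ((∏ i ∈ J', H i ω / p i ω) - ∫ ω', ∏ i ∈ J', H i ω' / p i ω' ∂μ) ∂μ = 0 := by
  have hH1 : ∀ i, 1 ≤ i → ∀ ω, |H i ω| ≤ 1 := fun i hi ω => by
    rcases hH01 i hi ω with h | h <;> simp [h]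
  have hpc : ∀ i, 1 ≤ i → ∀ᵐ ω ∂μ, c ≤ p i ω := fun i hi => (hpb i hi).mono fun _ h => h.1
  have hmemLp : ∀ K : Finset ℕ, (∀ i ∈ K, 1 ≤ i) → MemLp (selectionEstimator H p K) 2 μ :=
    fun K hK => memLp_selectionEstimator hc0
      (fun i hi => (hHmeas i (hK i hi)).mono (ℱ.le i) le_rfl) (fun i hi => hH1 i (hK i hi))
      (fun i hi => (hpmeas i (hK i hi)).mono (ℱ.le _) le_rfl) (fun i hi => hpc i (hK i hi)) 2
  have hmean : ∀ K : Finset ℕ, (∀ i ∈ K, 1 ≤ i) → μ[selectionEstimator H p K] = 1 :=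
    fun K hK => integral_selectionEstimator ℱ hc0 hHmeas hH1 hpmeas hpc hcond hK
  have hunion : selectionEstimator H p J * selectionEstimator H p J' =
      selectionEstimator H p (J ∪ J') := funext fun ω => (prod_union hdisj).symm
  change cov[selectionEstimator H p J, selectionEstimator H p J'; μ] = 0
  rw [covariance_eq_sub (hmemLp J hJ1) (hmemLp J' hJ'1), hunion, hmean J hJ1, hmean J' hJ'1,
    hmean (J ∪ J') fun i hi => (mem_union.mp hi).elim (hJ1 i) (hJ'1 i)]
  norm_num

theorem stmt5 {Ω : Type*} {m0 : MeasurableSpace Ω} {μ : Measure Ω}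
    [IsProbabilityMeasure μ] (ℱ : Filtration ℕ m0)
    (c : ℝ) (hc0 : 0 < c) (hc1 : c ≤ 1)
    (H p : ℕ → Ω → ℝ)
    (hHmeas : ∀ i, 1 ≤ i → Measurable[ℱ i] (H i))
    (hH01 : ∀ i, 1 ≤ i → ∀ ω, H i ω = 0 ∨ H i ω = 1)
    (hpmeas : ∀ i, 1 ≤ i → Measurable[ℱ (i - 1)] (p i))
    (hpb : ∀ i, 1 ≤ i → ∀ᵐ ω ∂μ, c ≤ p i ω ∧ p i ω ≤ 1)
    (hcond : ∀ i, 1 ≤ i → μ[H i | ℱ (i - 1)] =ᵐ[μ] p i)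
    (J J' : Finset ℕ) (hJ1 : ∀ i ∈ J, 1 ≤ i) (hJ'1 : ∀ i ∈ J', 1 ≤ i)
    (hdisj : Disjoint J J') :
    ∫ ω, ((∏ i ∈ J, H i ω / p i ω) - ∫ ω', ∏ i ∈ J, H i ω' / p i ω' ∂μ)
        * ((∏ i ∈ J', H i ω / p i ω) - ∫ ω', ∏ i ∈ J', H i ω' / p i ω' ∂μ) ∂μ = 0 :=
  stmt5_general ℱ c hc0 H p hHmeas hH01 hpmeas hpb hcond J J' hJ1 hJ'1 hdisj
end

section
/- For any finite sets of indices J and J', the random variable Ĉ(J, J') = Ŝ(J ∪ J') · (Ŝ(J ∩ J') − 1) is an unbiased estimator of the covariance of Ŝ(J) and Ŝ(J'); that is, E[Ŝ(J ∪ J') · (Ŝ(J ∩ J') − 1)] = Cov(Ŝ(J), Ŝ(J')). -/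
/-!
Write `Ŝ(K) = ∏_{i ∈ K} Z_i` with `Z_i = H_i / p_i`. Since `p_i` is known at time `i - 1`,
`E[Z_i | ℱ_{i-1}] = 1`, and conditioning on the time just before the largest index of `K` peels
off one factor at a time, so `E[Ŝ(K)] = 1`. Then `Cov(Ŝ(J), Ŝ(J')) = E[Ŝ(J) Ŝ(J')] - 1`, while
`Ŝ(J ∪ J') Ŝ(J ∩ J') = Ŝ(J) Ŝ(J')` turns the estimator's mean into the same expression.
-/

open MeasureTheory ProbabilityTheory Finset Filter
open scoped ENNReal

section ProductsOfUnitMeanFactors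

variable {Ω : Type*} {m0 : MeasurableSpace Ω} {μ : Measure Ω} [IsProbabilityMeasure μ]
  (ℱ : Filtration ℕ m0) {Z : ℕ → Ω → ℝ}

theorem integral_prod_eq_one_of_condExp_eq_one {K : Finset ℕ}
    (hmeas : ∀ i ∈ K, StronglyMeasurable[ℱ i] (Z i)) (hbdd : ∀ i ∈ K, MemLp (Z i) ∞ μ)
    (hcond : ∀ i ∈ K, μ[Z i | ℱ (i - 1)] =ᵐ[μ] 1) :
    ∫ ω, ∏ i ∈ K, Z i ω ∂μ = 1 := by
  induction K using Finset.induction_on_max with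
  | empty => simp
  | insert a s hlt ih =>
    have ha : a ∉ s := fun h => (hlt a h).false
    rw [forall_mem_insert] at hmeas hbdd hcond
    set X : Ω → ℝ := fun ω => ∏ i ∈ s, Z i ω
    have hX : StronglyMeasurable[ℱ (a - 1)] X :=
      Finset.stronglyMeasurable_fun_prod s fun i hi =>
        (hmeas.2 i hi).mono (ℱ.mono (Nat.le_sub_one_of_lt (hlt i hi)))
    have hXbdd : MemLp X ∞ μ := by simpa using MemLp.prod' (p := fun _ => ∞) hbdd.2
    have hXint : Integrable (Z a * X) μ := (hXbdd.mul hbdd.1).integrable le_top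
    calc ∫ ω, ∏ i ∈ insert a s, Z i ω ∂μ
        = ∫ ω, μ[Z a * X | ℱ (a - 1)] ω ∂μ := by
          simp_rw [integral_condExp (ℱ.le _), prod_insert ha]; rfl
      _ = ∫ ω, (μ[Z a | ℱ (a - 1)] * X) ω ∂μ :=
          integral_congr_ae (condExp_mul_of_stronglyMeasurable_right hX hXint
            (hbdd.1.integrable le_top))
      _ = 1 := by
          rw [← ih hmeas.2 hbdd.2 hcond.2]
          refine integral_congr_ae ?_
          filter_upwards [hcond.1] with ω hω
          rw [Pi.mul_apply, hω, Pi.one_apply, one_mul]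

theorem integral_prod_union_mul_prod_inter_sub_one_eq_covariance {J J' : Finset ℕ}
    (hmeas : ∀ i ∈ J ∪ J', StronglyMeasurable[ℱ i] (Z i))
    (hbdd : ∀ i ∈ J ∪ J', MemLp (Z i) ∞ μ)
    (hcond : ∀ i ∈ J ∪ J', μ[Z i | ℱ (i - 1)] =ᵐ[μ] 1) :
    ∫ ω, (∏ i ∈ J ∪ J', Z i ω) * ((∏ i ∈ J ∩ J', Z i ω) - 1) ∂μ
      = cov[fun ω => ∏ i ∈ J, Z i ω, fun ω => ∏ i ∈ J', Z i ω; μ] := by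
  have hmean : ∀ K ⊆ J ∪ J', ∫ ω, ∏ i ∈ K, Z i ω ∂μ = 1 := fun K hK =>
    integral_prod_eq_one_of_condExp_eq_one ℱ (fun i hi => hmeas i (hK hi))
      (fun i hi => hbdd i (hK hi)) (fun i hi => hcond i (hK hi))
  have hbddProd : ∀ K ⊆ J ∪ J', MemLp (fun ω => ∏ i ∈ K, Z i ω) ∞ μ := fun K hK => by
    simpa using MemLp.prod' (p := fun _ => ∞) fun i hi => hbdd i (hK hi)
  have hJ := hbddProd J subset_union_left
  have hJ' := hbddProd J' subset_union_right
  have hU := hbddProd (J ∪ J') subset_rfl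
  calc ∫ ω, (∏ i ∈ J ∪ J', Z i ω) * ((∏ i ∈ J ∩ J', Z i ω) - 1) ∂μ
      = ∫ ω, (∏ i ∈ J, Z i ω) * (∏ i ∈ J', Z i ω) - ∏ i ∈ J ∪ J', Z i ω ∂μ := by
        simp_rw [mul_sub_one, prod_union_inter]
    _ = ∫ ω, (∏ i ∈ J, Z i ω) * (∏ i ∈ J', Z i ω) ∂μ - 1 := by
        rw [integral_sub ?_ (hU.integrable le_top), hmean _ subset_rfl]
        exact (hJ'.mul hJ).integrable le_top
    _ = cov[fun ω => ∏ i ∈ J, Z i ω, fun ω => ∏ i ∈ J', Z i ω; μ] := by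
        rw [covariance_eq_sub (hJ.mono_exponent le_top) (hJ'.mono_exponent le_top),
          hmean J subset_union_left, hmean J' subset_union_right, mul_one]
        rfl

end ProductsOfUnitMeanFactors

section InverseProbabilityWeighting

variable {Ω : Type*} {m0 : MeasurableSpace Ω} {μ : Measure Ω} {f g : Ω → ℝ}

theorem condExp_div_ae_eq_one {m : MeasurableSpace Ω} (hf : Integrable f μ)
    (hfg : Integrable (fun ω => f ω / g ω) μ) (hg : StronglyMeasurable[m] g)
    (hg0 : ∀ᵐ ω ∂μ, g ω ≠ 0) (hcond : μ[f | m] =ᵐ[μ] g) :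
    μ[fun ω => f ω / g ω | m] =ᵐ[μ] 1 := by
  have hdiv : (fun ω => f ω / g ω) = g⁻¹ * f := by
    ext ω
    exact div_eq_inv_mul _ _
  rw [hdiv] at hfg ⊢
  filter_upwards [condExp_mul_of_stronglyMeasurable_left hg.inv₀ hfg hf, hcond, hg0]
    with ω hpull hω hω0
  rw [hpull, Pi.mul_apply, hω, Pi.inv_apply, inv_mul_cancel₀ hω0, Pi.one_apply]

theorem memLp_top_div_of_norm_le_one {c : ℝ} (hf : AEStronglyMeasurable f μ)
    (hg : AEStronglyMeasurable g μ) (hc : 0 < c) (hf1 : ∀ᵐ ω ∂μ, ‖f ω‖ ≤ 1)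
    (hgc : ∀ᵐ ω ∂μ, c ≤ g ω) : MemLp (fun ω => f ω / g ω) ∞ μ := by
  refine memLp_top_of_bound (hf.div₀ hg) (1 / c) ?_
  filter_upwards [hf1, hgc] with ω hfω hgω
  rw [norm_div]
  exact div_le_div₀ zero_le_one hfω hc (hgω.trans (le_abs_self _))

end InverseProbabilityWeighting

theorem stmt8_general {Ω : Type*} {m0 : MeasurableSpace Ω} {μ : Measure Ω}
    [IsProbabilityMeasure μ] (ℱ : Filtration ℕ m0)
    (c : ℝ) (hc0 : 0 < c)
    (H p : ℕ → Ω → ℝ)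
    (hHmeas : ∀ i, 1 ≤ i → Measurable[ℱ i] (H i))
    (hH01 : ∀ i, 1 ≤ i → ∀ ω, H i ω = 0 ∨ H i ω = 1)
    (hpmeas : ∀ i, 1 ≤ i → Measurable[ℱ (i - 1)] (p i))
    (hpb : ∀ i, 1 ≤ i → ∀ᵐ ω ∂μ, c ≤ p i ω ∧ p i ω ≤ 1)
    (hcond : ∀ i, 1 ≤ i → μ[H i | ℱ (i - 1)] =ᵐ[μ] p i)
    (J J' : Finset ℕ) (hJ1 : ∀ i ∈ J, 1 ≤ i) (hJ'1 : ∀ i ∈ J', 1 ≤ i) :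
    ∫ ω, (∏ i ∈ J ∪ J', H i ω / p i ω) * ((∏ i ∈ J ∩ J', H i ω / p i ω) - 1) ∂μ
      = ∫ ω, ((∏ i ∈ J, H i ω / p i ω) - ∫ ω', ∏ i ∈ J, H i ω' / p i ω' ∂μ)
          * ((∏ i ∈ J', H i ω / p i ω) - ∫ ω', ∏ i ∈ J', H i ω' / p i ω' ∂μ) ∂μ := by
  have hpos : ∀ i ∈ J ∪ J', 1 ≤ i := fun i hi => (mem_union.mp hi).elim (hJ1 i) (hJ'1 i)
  have hHnorm (i : ℕ) (hi : 1 ≤ i) : ∀ᵐ ω ∂μ, ‖H i ω‖ ≤ 1 :=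
    ae_of_all _ fun ω => by rcases hH01 i hi ω with h | h <;> simp [h]
  have hHint (i : ℕ) (hi : 1 ≤ i) : Integrable (H i) μ :=
    .of_bound ((hHmeas i hi).mono (ℱ.le i) le_rfl).aestronglyMeasurable 1 (hHnorm i hi)
  have hZmeas (i : ℕ) (hi : 1 ≤ i) : StronglyMeasurable[ℱ i] fun ω => H i ω / p i ω :=
    ((hHmeas i hi).div ((hpmeas i hi).mono (ℱ.mono (Nat.sub_le i 1)) le_rfl)).stronglyMeasurable
  have hZbdd (i : ℕ) (hi : 1 ≤ i) : MemLp (fun ω => H i ω / p i ω) ∞ μ :=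
    memLp_top_div_of_norm_le_one (hHint i hi).aestronglyMeasurable
      ((hpmeas i hi).mono (ℱ.le _) le_rfl).aestronglyMeasurable hc0 (hHnorm i hi)
      ((hpb i hi).mono fun _ h => h.1)
  have hZcond (i : ℕ) (hi : 1 ≤ i) : μ[fun ω => H i ω / p i ω | ℱ (i - 1)] =ᵐ[μ] 1 :=
    condExp_div_ae_eq_one (hHint i hi) ((hZbdd i hi).integrable le_top)
      (hpmeas i hi).stronglyMeasurable ((hpb i hi).mono fun _ h => (hc0.trans_le h.1).ne')
      (hcond i hi)
  exact integral_prod_union_mul_prod_inter_sub_one_eq_covariance ℱ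
    (fun i hi => hZmeas i (hpos i hi)) (fun i hi => hZbdd i (hpos i hi))
    (fun i hi => hZcond i (hpos i hi))

theorem stmt8 {Ω : Type*} {m0 : MeasurableSpace Ω} {μ : Measure Ω}
    [IsProbabilityMeasure μ] (ℱ : Filtration ℕ m0)
    (c : ℝ) (hc0 : 0 < c) (hc1 : c ≤ 1)
    (H p : ℕ → Ω → ℝ)
    (hHmeas : ∀ i, 1 ≤ i → Measurable[ℱ i] (H i))
    (hH01 : ∀ i, 1 ≤ i → ∀ ω, H i ω = 0 ∨ H i ω = 1)
    (hpmeas : ∀ i, 1 ≤ i → Measurable[ℱ (i - 1)] (p i))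
    (hpb : ∀ i, 1 ≤ i → ∀ᵐ ω ∂μ, c ≤ p i ω ∧ p i ω ≤ 1)
    (hcond : ∀ i, 1 ≤ i → μ[H i | ℱ (i - 1)] =ᵐ[μ] p i)
    (J J' : Finset ℕ) (hJ1 : ∀ i ∈ J, 1 ≤ i) (hJ'1 : ∀ i ∈ J', 1 ≤ i) :
    ∫ ω, (∏ i ∈ J ∪ J', H i ω / p i ω) * ((∏ i ∈ J ∩ J', H i ω / p i ω) - 1) ∂μ
      = ∫ ω, ((∏ i ∈ J, H i ω / p i ω) - ∫ ω', ∏ i ∈ J, H i ω' / p i ω' ∂μ)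
          * ((∏ i ∈ J', H i ω / p i ω) - ∫ ω', ∏ i ∈ J', H i ω' / p i ω' ∂μ) ∂μ :=
  stmt8_general ℱ c hc0 H p hHmeas hH01 hpmeas hpb hcond J J' hJ1 hJ'1
end

section
/- For any finite set of indices J, the random variable Ŝ(J) · (Ŝ(J) − 1) is an unbiased estimator of the variance of Ŝ(J); that is, E[Ŝ(J) · (Ŝ(J) − 1)] = Var(Ŝ(J)). -/
/-!
For `S = Ŝ(J)` we have `S (S - 1) = S² - S` and `Var S = E[S²] - E[S]²`, so it suffices that
`E[S] = 1`. This follows by peeling off the factor with the largest index `a`: the remaining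
factors are `ℱ (a - 1)`-measurable, and the conditional expectation of `H a / p a` given
`ℱ (a - 1)` is `μ[H a | ℱ (a - 1)] / p a = 1`. Since `p i ≥ c > 0`, every factor is bounded,
which gives all the integrability needed.
-/

open MeasureTheory Finset ProbabilityTheory

open scoped ENNReal

namespace MeasureTheory

variable {Ω : Type*} {m0 : MeasurableSpace Ω} {μ : Measure Ω}

lemma integral_mul_sub_one_eq_variance [IsProbabilityMeasure μ] {X : Ω → ℝ}
    (hX : MemLp X 2 μ) (hX1 : μ[X] = 1) :
    ∫ ω, X ω * (X ω - 1) ∂μ = Var[X; μ] := by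
  have hsq : ∀ ω, X ω * (X ω - 1) = X ω ^ 2 - X ω := fun ω => by ring
  simp_rw [hsq]
  rw [variance_eq_sub hX, integral_sub hX.integrable_sq (hX.integrable one_le_two), hX1]
  simp only [Pi.pow_apply, one_pow]

lemma memLp_top_inv_of_le {q : Ω → ℝ} {c : ℝ} (hc : 0 < c) (hq : AEMeasurable q μ)
    (hqc : ∀ᵐ ω ∂μ, c ≤ q ω) : MemLp q⁻¹ ∞ μ := by
  refine memLp_top_of_bound hq.inv.aestronglyMeasurable c⁻¹ ?_
  filter_upwards [hqc] with ω hqω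
  rw [Pi.inv_apply, norm_inv, Real.norm_of_nonneg (hc.le.trans hqω)]
  exact inv_anti₀ hc hqω

lemma memLp_top_div_of_le {H q : Ω → ℝ} {c : ℝ} (hc : 0 < c) (hH : MemLp H ∞ μ)
    (hq : AEMeasurable q μ) (hqc : ∀ᵐ ω ∂μ, c ≤ q ω) :
    MemLp (fun ω => H ω / q ω) ∞ μ := by
  simpa only [div_eq_inv_mul, Pi.inv_apply] using hH.mul' (memLp_top_inv_of_le hc hq hqc) (r := ∞)

lemma condExp_div_eq_one {m : MeasurableSpace Ω} (hm : m ≤ m0) {H q : Ω → ℝ} {c : ℝ}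
    (hc : 0 < c) (hq : StronglyMeasurable[m] q) (hqc : ∀ᵐ ω ∂μ, c ≤ q ω)
    (hH : Integrable H μ) (hHq : μ[H | m] =ᵐ[μ] q) :
    μ[fun ω => H ω / q ω | m] =ᵐ[μ] 1 := by
  have hq_inv_bdd : MemLp q⁻¹ ∞ μ :=
    memLp_top_inv_of_le hc (hq.measurable.mono hm le_rfl).aemeasurable hqc
  have hdiv : (fun ω => H ω / q ω) = q⁻¹ * H := funext fun ω => div_eq_inv_mul _ _
  rw [hdiv]
  filter_upwards [condExp_mul_of_stronglyMeasurable_left hq.measurable.inv.stronglyMeasurable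
    (hH.mul_of_top_right hq_inv_bdd) hH, hHq, hqc] with ω hpull hHqω hqω
  rw [hpull, Pi.mul_apply, hHqω, Pi.inv_apply, inv_mul_cancel₀ (hc.trans_le hqω).ne',
    Pi.one_apply]

theorem integral_prod_eq_one_of_condExp_eq_one [IsProbabilityMeasure μ] (ℱ : Filtration ℕ m0)
    {Y : ℕ → Ω → ℝ} (J : Finset ℕ) (hY : ∀ i ∈ J, StronglyMeasurable[ℱ i] (Y i))
    (hY_bdd : ∀ i ∈ J, MemLp (Y i) ∞ μ) (hY_cond : ∀ i ∈ J, μ[Y i | ℱ (i - 1)] =ᵐ[μ] 1) :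
    ∫ ω, ∏ i ∈ J, Y i ω ∂μ = 1 := by
  classical
  induction J using Finset.induction_on_max with
  | empty => simp
  | insert a s hlt ih =>
    have ha : a ∉ s := fun h => lt_irrefl a (hlt a h)
    set f := fun ω => ∏ i ∈ s, Y i ω
    have hf : StronglyMeasurable[ℱ (a - 1)] f :=
      s.stronglyMeasurable_fun_prod fun i hi =>
        (hY i (mem_insert_of_mem hi)).mono (ℱ.mono (Nat.le_sub_one_of_lt (hlt i hi)))
    have hf_bdd : MemLp f ∞ μ := by
      simpa using MemLp.prod' fun i hi => hY_bdd i (mem_insert_of_mem hi)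
    have hYa : Integrable (Y a) μ := (hY_bdd a (mem_insert_self a s)).integrable le_top
    calc ∫ ω, ∏ i ∈ insert a s, Y i ω ∂μ = ∫ ω, (f * Y a) ω ∂μ := by
          simp_rw [prod_insert ha, mul_comm (Y a _)]; rfl
      _ = ∫ ω, μ[f * Y a | ℱ (a - 1)] ω ∂μ := (integral_condExp (ℱ.le _)).symm
      _ = ∫ ω, f ω ∂μ := by
          refine integral_congr_ae ?_
          filter_upwards [condExp_mul_of_stronglyMeasurable_left hf
            (hYa.mul_of_top_right hf_bdd) hYa, hY_cond a (mem_insert_self a s)] with ω h h1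
          rw [h, Pi.mul_apply, h1, Pi.one_apply, mul_one]
      _ = 1 := ih (fun i hi => hY i (mem_insert_of_mem hi))
          (fun i hi => hY_bdd i (mem_insert_of_mem hi))
          (fun i hi => hY_cond i (mem_insert_of_mem hi))

end MeasureTheory

theorem stmt10_general {Ω : Type*} {m0 : MeasurableSpace Ω} {μ : Measure Ω}
    [IsProbabilityMeasure μ] (ℱ : Filtration ℕ m0)
    (c : ℝ) (hc0 : 0 < c)
    (H p : ℕ → Ω → ℝ)
    (hHmeas : ∀ i, 1 ≤ i → Measurable[ℱ i] (H i))
    (hH01 : ∀ i, 1 ≤ i → ∀ ω, H i ω = 0 ∨ H i ω = 1)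
    (hpmeas : ∀ i, 1 ≤ i → Measurable[ℱ (i - 1)] (p i))
    (hpb : ∀ i, 1 ≤ i → ∀ᵐ ω ∂μ, c ≤ p i ω ∧ p i ω ≤ 1)
    (hcond : ∀ i, 1 ≤ i → μ[H i | ℱ (i - 1)] =ᵐ[μ] p i)
    (J : Finset ℕ) (hJ1 : ∀ i ∈ J, 1 ≤ i) :
    ∫ ω, (∏ i ∈ J, H i ω / p i ω) * ((∏ i ∈ J, H i ω / p i ω) - 1) ∂μ
      = ∫ ω, ((∏ i ∈ J, H i ω / p i ω) - ∫ ω', ∏ i ∈ J, H i ω' / p i ω' ∂μ) ^ 2 ∂μ := by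
  have hpc : ∀ i, 1 ≤ i → ∀ᵐ ω ∂μ, c ≤ p i ω := fun i hi => (hpb i hi).mono fun _ h => h.1
  have hH_bdd : ∀ i, 1 ≤ i → MemLp (H i) ∞ μ := fun i hi =>
    memLp_top_of_bound ((hHmeas i hi).mono (ℱ.le i) le_rfl).aestronglyMeasurable 1
      (ae_of_all _ fun ω => by rcases hH01 i hi ω with h | h <;> simp [h])
  have hY : ∀ i ∈ J, StronglyMeasurable[ℱ i] (fun ω => H i ω / p i ω) := fun i hi =>
    ((hHmeas i (hJ1 i hi)).div
      ((hpmeas i (hJ1 i hi)).mono (ℱ.mono (Nat.sub_le i 1)) le_rfl)).stronglyMeasurable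
  have hY_bdd : ∀ i ∈ J, MemLp (fun ω => H i ω / p i ω) ∞ μ := fun i hi =>
    memLp_top_div_of_le hc0 (hH_bdd i (hJ1 i hi))
      ((hpmeas i (hJ1 i hi)).mono (ℱ.le _) le_rfl).aemeasurable (hpc i (hJ1 i hi))
  have hY_cond : ∀ i ∈ J, μ[fun ω => H i ω / p i ω | ℱ (i - 1)] =ᵐ[μ] 1 := fun i hi =>
    condExp_div_eq_one (ℱ.le _) hc0 (hpmeas i (hJ1 i hi)).stronglyMeasurable (hpc i (hJ1 i hi))
      ((hH_bdd i (hJ1 i hi)).integrable le_top) (hcond i (hJ1 i hi))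
  have hS : MemLp (fun ω => ∏ i ∈ J, H i ω / p i ω) ∞ μ := by simpa using MemLp.prod' hY_bdd
  rw [← variance_eq_integral hS.aemeasurable]
  exact integral_mul_sub_one_eq_variance (hS.mono_exponent le_top)
    (integral_prod_eq_one_of_condExp_eq_one ℱ J hY hY_bdd hY_cond)

theorem stmt10 {Ω : Type*} {m0 : MeasurableSpace Ω} {μ : Measure Ω}
    [IsProbabilityMeasure μ] (ℱ : Filtration ℕ m0)
    (c : ℝ) (hc0 : 0 < c) (hc1 : c ≤ 1)
    (H p : ℕ → Ω → ℝ)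
    (hHmeas : ∀ i, 1 ≤ i → Measurable[ℱ i] (H i))
    (hH01 : ∀ i, 1 ≤ i → ∀ ω, H i ω = 0 ∨ H i ω = 1)
    (hpmeas : ∀ i, 1 ≤ i → Measurable[ℱ (i - 1)] (p i))
    (hpb : ∀ i, 1 ≤ i → ∀ᵐ ω ∂μ, c ≤ p i ω ∧ p i ω ≤ 1)
    (hcond : ∀ i, 1 ≤ i → μ[H i | ℱ (i - 1)] =ᵐ[μ] p i)
    (J : Finset ℕ) (hJ1 : ∀ i ∈ J, 1 ≤ i) :
    ∫ ω, (∏ i ∈ J, H i ω / p i ω) * ((∏ i ∈ J, H i ω / p i ω) - 1) ∂μ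
      = ∫ ω, ((∏ i ∈ J, H i ω / p i ω) - ∫ ω', ∏ i ∈ J, H i ω' / p i ω' ∂μ) ^ 2 ∂μ :=
  stmt10_general ℱ c hc0 H p hHmeas hH01 hpmeas hpb hcond J hJ1
end

section
/- Let J be a nonempty finite set of indices and define the node-selection estimator n̂ = 1 − ∏_{i∈J} (1 − Ŝ_i). Then E[n̂] = 1, and for every ω ∈ Ω with H_i(ω) = 0 for all i ∈ J one has n̂(ω) = 0. -/
open MeasureTheory Finset

/-!
Each factor `1 - H i / p i` is bounded and has conditional mean zero given `ℱ (i - 1)`. For the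
largest index `j ∈ J` the product of the remaining factors is `ℱ (j - 1)`-measurable, so it can be
pulled out of the conditional expectation given `ℱ (j - 1)`; the product over `J` therefore has
mean zero, and `n̂` has mean one.
-/

section

variable {Ω : Type*} {m m0 : MeasurableSpace Ω} {μ : Measure Ω}

theorem integral_mul_eq_zero_of_condExp_eq_zero (hm : m ≤ m0) [SigmaFinite (μ.trim hm)]
    {f g : Ω → ℝ} (hf : StronglyMeasurable[m] f) (hfg : Integrable (f * g) μ)
    (hg : Integrable g μ) (hg0 : μ[g | m] =ᵐ[μ] 0) :
    ∫ ω, f ω * g ω ∂μ = 0 := by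
  rw [← integral_condExp hm]
  refine integral_eq_zero_of_ae ((condExp_mul_of_stronglyMeasurable_left hf hfg hg).trans ?_)
  filter_upwards [hg0] with ω hω
  simp [hω]

theorem integrable_finset_prod_of_ae_abs_le [IsFiniteMeasure μ] {ι : Type*} (s : Finset ι)
    {X : ι → Ω → ℝ} {C : ℝ} (hX : ∀ i ∈ s, AEStronglyMeasurable (X i) μ)
    (hXC : ∀ i ∈ s, ∀ᵐ ω ∂μ, |X i ω| ≤ C) :
    Integrable (fun ω => ∏ i ∈ s, X i ω) μ := by
  refine .of_bound (s.aestronglyMeasurable_fun_prod hX) (C ^ s.card) ?_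
  filter_upwards [(Filter.eventually_all_finset s).2 hXC] with ω hω
  rw [Real.norm_eq_abs, abs_prod, ← prod_const]
  exact prod_le_prod (fun i _ => abs_nonneg _) hω

theorem integral_prod_eq_zero_of_condExp_eq_zero [IsFiniteMeasure μ] (ℱ : Filtration ℕ m0)
    {X : ℕ → Ω → ℝ} {C : ℝ} (J : Finset ℕ) (hJ : J.Nonempty)
    (hX : ∀ i ∈ J, StronglyMeasurable[ℱ i] (X i)) (hXC : ∀ i ∈ J, ∀ᵐ ω ∂μ, |X i ω| ≤ C)
    (hX0 : ∀ i ∈ J, μ[X i | ℱ (i - 1)] =ᵐ[μ] 0) :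
    ∫ ω, ∏ i ∈ J, X i ω ∂μ = 0 := by
  set j := J.max' hJ
  have hj : j ∈ J := J.max'_mem hJ
  have hpast : ∀ i ∈ J.erase j, StronglyMeasurable[ℱ (j - 1)] (X i) := fun i hi =>
    have hij : i < j := lt_of_le_of_ne (J.le_max' i (mem_of_mem_erase hi)) (ne_of_mem_erase hi)
    (hX i (mem_of_mem_erase hi)).mono (ℱ.mono (by omega))
  have hint : ∀ K ⊆ J, Integrable (fun ω => ∏ i ∈ K, X i ω) μ := fun K hK =>
    integrable_finset_prod_of_ae_abs_le K
      (fun i hi => ((hX i (hK hi)).mono (ℱ.le i)).aestronglyMeasurable) (fun i hi => hXC i (hK hi))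
  have hsplit : (fun ω => ∏ i ∈ J, X i ω) = (∏ i ∈ J.erase j, X i) * X j := by
    ext ω
    rw [Pi.mul_apply, prod_apply, J.prod_erase_mul _ hj]
  have hXj : Integrable (X j) μ := by simpa using hint {j} (singleton_subset_iff.2 hj)
  rw [hsplit]
  exact integral_mul_eq_zero_of_condExp_eq_zero (ℱ.le (j - 1))
    ((J.erase j).stronglyMeasurable_prod hpast) (hsplit ▸ hint J subset_rfl) hXj (hX0 j hj)

theorem abs_one_sub_div_le {h p c : ℝ} (hh : |h| ≤ 1) (hc : 0 < c) (hcp : c ≤ p) :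
    |1 - h / p| ≤ 1 + c⁻¹ := by
  have hp : 0 < p := hc.trans_le hcp
  calc |1 - h / p| ≤ |1| + |h / p| := abs_sub _ _
    _ = 1 + |h| / p := by rw [abs_one, abs_div, abs_of_pos hp]
    _ ≤ 1 + 1 / p := by gcongr
    _ ≤ 1 + c⁻¹ := by rw [one_div]; gcongr

theorem condExp_one_sub_div_eq_zero [IsFiniteMeasure μ] (hm : m ≤ m0) {H p : Ω → ℝ} {c : ℝ}
    (hc : 0 < c) (hp : StronglyMeasurable[m] p) (hcp : ∀ᵐ ω ∂μ, c ≤ p ω) (hH : Integrable H μ)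
    (hHp : μ[H | m] =ᵐ[μ] p) :
    μ[fun ω => 1 - H ω / p ω | m] =ᵐ[μ] 0 := by
  have hpinv : StronglyMeasurable[m] p⁻¹ := hp.measurable.inv.stronglyMeasurable
  have hpH : Integrable (p⁻¹ * H) μ := by
    refine hH.bdd_mul (c := c⁻¹) (hpinv.mono hm).aestronglyMeasurable ?_
    filter_upwards [hcp] with ω hω
    rw [Pi.inv_apply, norm_inv, Real.norm_of_nonneg (hc.le.trans hω)]
    exact inv_anti₀ hc hω
  have hone : μ[p⁻¹ * H | m] =ᵐ[μ] 1 := by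
    filter_upwards [condExp_mul_of_stronglyMeasurable_left hpinv hpH hH, hHp, hcp]
      with ω hω hHω hcω
    rw [hω, Pi.mul_apply, hHω, Pi.inv_apply, inv_mul_cancel₀ (hc.trans_le hcω).ne', Pi.one_apply]
  have hsub := condExp_sub (integrable_const (1 : ℝ)) hpH m
  rw [condExp_const hm] at hsub
  have hfun : (fun ω => 1 - H ω / p ω) = (fun _ => (1 : ℝ)) - p⁻¹ * H := by
    ext ω
    simp [div_eq_inv_mul]
  filter_upwards [hsub, hone] with ω hω hω'
  rw [hfun, hω, Pi.sub_apply, hω', Pi.one_apply, sub_self, Pi.zero_apply]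

end

theorem stmt14_general {Ω : Type*} {m0 : MeasurableSpace Ω} {μ : Measure Ω}
    [IsProbabilityMeasure μ] (ℱ : Filtration ℕ m0)
    (c : ℝ) (hc0 : 0 < c)
    (H p : ℕ → Ω → ℝ)
    (hHmeas : ∀ i, 1 ≤ i → Measurable[ℱ i] (H i))
    (hH01 : ∀ i, 1 ≤ i → ∀ ω, H i ω = 0 ∨ H i ω = 1)
    (hpmeas : ∀ i, 1 ≤ i → Measurable[ℱ (i - 1)] (p i))
    (hpb : ∀ i, 1 ≤ i → ∀ᵐ ω ∂μ, c ≤ p i ω ∧ p i ω ≤ 1)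
    (hcond : ∀ i, 1 ≤ i → μ[H i | ℱ (i - 1)] =ᵐ[μ] p i)
    (J : Finset ℕ) (hJne : J.Nonempty) (hJ1 : ∀ i ∈ J, 1 ≤ i) :
    (∫ ω, (1 - ∏ i ∈ J, (1 - H i ω / p i ω)) ∂μ = 1) ∧
      (∀ ω, (∀ i ∈ J, H i ω = 0) → 1 - ∏ i ∈ J, (1 - H i ω / p i ω) = 0) := by
  have hHabs : ∀ i ∈ J, ∀ ω, |H i ω| ≤ 1 := fun i hi ω => by
    rcases hH01 i (hJ1 i hi) ω with h | h <;> simp [h]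
  have hHint : ∀ i ∈ J, Integrable (H i) μ := fun i hi =>
    .of_bound ((hHmeas i (hJ1 i hi)).mono (ℱ.le i) le_rfl).aestronglyMeasurable 1
      (.of_forall (hHabs i hi))
  have hmeas : ∀ i ∈ J, StronglyMeasurable[ℱ i] (fun ω => 1 - H i ω / p i ω) := fun i hi =>
    have hp : Measurable[ℱ i] (p i) := (hpmeas i (hJ1 i hi)).mono (ℱ.mono (i.sub_le 1)) le_rfl
    (measurable_const.sub ((hHmeas i (hJ1 i hi)).div hp)).stronglyMeasurable
  have hbdd : ∀ i ∈ J, ∀ᵐ ω ∂μ, |1 - H i ω / p i ω| ≤ 1 + c⁻¹ := fun i hi => by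
    filter_upwards [hpb i (hJ1 i hi)] with ω hω
    exact abs_one_sub_div_le (hHabs i hi ω) hc0 hω.1
  have hmean_zero : ∫ ω, ∏ i ∈ J, (1 - H i ω / p i ω) ∂μ = 0 :=
    integral_prod_eq_zero_of_condExp_eq_zero ℱ J hJne hmeas hbdd fun i hi =>
      condExp_one_sub_div_eq_zero (ℱ.le _) hc0 (hpmeas i (hJ1 i hi)).stronglyMeasurable
        ((hpb i (hJ1 i hi)).mono fun _ hω => hω.1) (hHint i hi) (hcond i (hJ1 i hi))
  refine ⟨?_, fun ω hω => ?_⟩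
  · rw [integral_sub (integrable_const 1) (integrable_finset_prod_of_ae_abs_le J
      (fun i hi => ((hmeas i hi).mono (ℱ.le i)).aestronglyMeasurable) hbdd), hmean_zero]
    simp
  · rw [prod_eq_one fun i hi => by rw [hω i hi, zero_div, sub_zero], sub_self]

theorem stmt14 {Ω : Type*} {m0 : MeasurableSpace Ω} {μ : Measure Ω}
    [IsProbabilityMeasure μ] (ℱ : Filtration ℕ m0)
    (c : ℝ) (hc0 : 0 < c) (hc1 : c ≤ 1)
    (H p : ℕ → Ω → ℝ)
    (hHmeas : ∀ i, 1 ≤ i → Measurable[ℱ i] (H i))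
    (hH01 : ∀ i, 1 ≤ i → ∀ ω, H i ω = 0 ∨ H i ω = 1)
    (hpmeas : ∀ i, 1 ≤ i → Measurable[ℱ (i - 1)] (p i))
    (hpb : ∀ i, 1 ≤ i → ∀ᵐ ω ∂μ, c ≤ p i ω ∧ p i ω ≤ 1)
    (hcond : ∀ i, 1 ≤ i → μ[H i | ℱ (i - 1)] =ᵐ[μ] p i)
    (J : Finset ℕ) (hJne : J.Nonempty) (hJ1 : ∀ i ∈ J, 1 ≤ i) :
    (∫ ω, (1 - ∏ i ∈ J, (1 - H i ω / p i ω)) ∂μ = 1) ∧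
      (∀ ω, (∀ i ∈ J, H i ω = 0) → 1 - ∏ i ∈ J, (1 - H i ω / p i ω) = 0) :=
  stmt14_general ℱ c hc0 H p hHmeas hH01 hpmeas hpb hcond J hJne hJ1
end

section
/- Let G be a simple graph on a finite vertex type V with m edges, and let e : Fin m ≃ edges(G) be an enumeration of its edges (the arrival order). For a 3-element set t of vertices that are pairwise adjacent in G (a triangle), let τ(t) ⊆ Fin m be the set of indices of its three edges. Then the triangle-count estimator N̂_T = ∑_{t triangle of G} ∏_{i∈τ(t)} H_i / p_i is unbiased for the number of triangles of G: E[N̂_T] = N_T, where N_T is the number of 3-element vertex sets of G that are pairwise adjacent. -/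
/-! Every triangle contributes expectation exactly `1` to `N̂_T`, because for any finite set `S` of
arrival indices `E[∏_{i∈S} H_i / p_i] = 1`. Peeling off the last index `a ∈ S`, the rest of the
product and `1 / p_a` are known at time `a`, so conditioning on `ℱ_a` replaces `H_a` by `p_a`,
which cancels; induction on `S` finishes. The lower bound `c ≤ p_i` keeps all the products
bounded, hence integrable. -/

open MeasureTheory Finset

section

variable {Ω : Type*} {m m0 : MeasurableSpace Ω} {μ : Measure Ω}

theorem integral_mul_eq_of_condExp_ae_eq (hm : m ≤ m0) [SigmaFinite (μ.trim hm)]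
    {Z X p : Ω → ℝ} (hZ : StronglyMeasurable[m] Z) (hZX : Integrable (Z * X) μ)
    (hX : Integrable X μ) (hcond : μ[X | m] =ᵐ[μ] p) :
    ∫ ω, Z ω * X ω ∂μ = ∫ ω, Z ω * p ω ∂μ :=
  calc ∫ ω, Z ω * X ω ∂μ = ∫ ω, (μ[Z * X | m]) ω ∂μ := (integral_condExp hm).symm
    _ = ∫ ω, Z ω * p ω ∂μ := integral_congr_ae <|
        (condExp_mul_of_stronglyMeasurable_left hZ hZX hX).trans <|
          hcond.mono fun ω hω => by simp only [Pi.mul_apply, hω]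

theorem abs_prod_div_le {ι : Type*} (S : Finset ι) {h q : ι → ℝ} {c : ℝ} (hc0 : 0 < c)
    (hh : ∀ i ∈ S, |h i| ≤ 1) (hq : ∀ i ∈ S, c ≤ q i) :
    |∏ i ∈ S, h i / q i| ≤ (1 / c) ^ #S := by
  rw [abs_prod, ← prod_const]
  refine prod_le_prod (fun i _ => abs_nonneg _) fun i hi => ?_
  have hqi : 0 < q i := hc0.trans_le (hq i hi)
  rw [abs_div, abs_of_pos hqi]
  exact div_le_div₀ zero_le_one (hh i hi) hc0 (hq i hi)

theorem integrable_prod_div [IsFiniteMeasure μ] {ι : Type*} (S : Finset ι) {H p : ι → Ω → ℝ}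
    {c : ℝ} (hc0 : 0 < c) (hH : ∀ i, Measurable (H i)) (hp : ∀ i, Measurable (p i))
    (hHb : ∀ i ω, |H i ω| ≤ 1) (hpb : ∀ i, ∀ᵐ ω ∂μ, c ≤ p i ω) :
    Integrable (fun ω => ∏ i ∈ S, H i ω / p i ω) μ := by
  refine .of_bound (measurable_prod S fun i _ => (hH i).div (hp i)).aestronglyMeasurable
    ((1 / c) ^ #S) ?_
  filter_upwards [(ae_all_iff.2 fun i : S => hpb i)] with ω hω
  exact abs_prod_div_le S hc0 (fun i _ => hHb i ω) fun i hi => hω ⟨i, hi⟩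

end

section

variable {Ω : Type*} {m0 : MeasurableSpace Ω} {μ : Measure Ω} [IsProbabilityMeasure μ]
  {ℱ : Filtration ℕ m0} {c : ℝ} {k : ℕ} {H p : Fin k → Ω → ℝ}

theorem measurable_prod_div_of_lt (hHmeas : ∀ i : Fin k, Measurable[ℱ (i.val + 1)] (H i))
    (hpmeas : ∀ i : Fin k, Measurable[ℱ i.val] (p i)) {S : Finset (Fin k)} {a : Fin k}
    (hS : ∀ i ∈ S, i < a) :
    Measurable[ℱ a.val] fun ω => ∏ i ∈ S, H i ω / p i ω :=
  measurable_prod S fun i hi =>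
    ((hHmeas i).mono (ℱ.mono (hS i hi)) le_rfl).div
      ((hpmeas i).mono (ℱ.mono (hS i hi).le) le_rfl)

theorem integral_prod_div_eq_one_s17 (hc0 : 0 < c)
    (hHmeas : ∀ i : Fin k, Measurable[ℱ (i.val + 1)] (H i)) (hHb : ∀ i ω, |H i ω| ≤ 1)
    (hpmeas : ∀ i : Fin k, Measurable[ℱ i.val] (p i)) (hpb : ∀ i, ∀ᵐ ω ∂μ, c ≤ p i ω)
    (hcond : ∀ i : Fin k, μ[H i | ℱ i.val] =ᵐ[μ] p i) (S : Finset (Fin k)) :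
    ∫ ω, ∏ i ∈ S, H i ω / p i ω ∂μ = 1 := by
  have hH : ∀ i, Measurable (H i) := fun i => (hHmeas i).mono (ℱ.le _) le_rfl
  have hp : ∀ i, Measurable (p i) := fun i => (hpmeas i).mono (ℱ.le _) le_rfl
  induction S using Finset.induction_on_max with
  | empty => simp
  | insert a S hS ih =>
    set Y : Ω → ℝ := fun ω => ∏ i ∈ S, H i ω / p i ω
    set Z : Ω → ℝ := fun ω => Y ω / p a ω
    have hZ : Measurable[ℱ a.val] Z :=
      (measurable_prod_div_of_lt hHmeas hpmeas hS).div (hpmeas a)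
    have hprod : (fun ω => ∏ i ∈ insert a S, H i ω / p i ω) = Z * H a := by
      funext ω
      rw [prod_insert fun ha => (hS a ha).false, Pi.mul_apply]
      ring
    have hZp : (fun ω => Z ω * p a ω) =ᵐ[μ] Y := by
      filter_upwards [hpb a] with ω hω
      exact div_mul_cancel₀ _ (hc0.trans_le hω).ne'
    calc ∫ ω, ∏ i ∈ insert a S, H i ω / p i ω ∂μ
        = ∫ ω, Z ω * H a ω ∂μ := by rw [hprod]; rfl
      _ = ∫ ω, Z ω * p a ω ∂μ :=
        integral_mul_eq_of_condExp_ae_eq (ℱ.le a.val) hZ.stronglyMeasurable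
          (hprod ▸ integrable_prod_div _ hc0 hH hp hHb hpb)
          (.of_bound (hH a).aestronglyMeasurable 1 (.of_forall (hHb a)))
          (hcond a)
      _ = 1 := (integral_congr_ae hZp).trans ih

end

theorem stmt17_general {Ω : Type*} {m0 : MeasurableSpace Ω} {μ : Measure Ω}
    [IsProbabilityMeasure μ] (ℱ : Filtration ℕ m0)
    (c : ℝ) (hc0 : 0 < c)
    {V : Type*} [Fintype V] [DecidableEq V]
    (G : SimpleGraph V) [DecidableRel G.Adj]
    (m : ℕ) (e : Fin m ≃ G.edgeSet)
    (H p : Fin m → Ω → ℝ)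
    (hHmeas : ∀ i : Fin m, Measurable[ℱ (i.val + 1)] (H i))
    (hH01 : ∀ (i : Fin m) (ω : Ω), H i ω = 0 ∨ H i ω = 1)
    (hpmeas : ∀ i : Fin m, Measurable[ℱ i.val] (p i))
    (hpb : ∀ i : Fin m, ∀ᵐ ω ∂μ, c ≤ p i ω ∧ p i ω ≤ 1)
    (hcond : ∀ i : Fin m, μ[H i | ℱ i.val] =ᵐ[μ] p i) :
    ∫ ω, ∑ t ∈ G.cliqueFinset 3,
        ∏ i ∈ Finset.univ.filter
          (fun i : Fin m => ∀ v ∈ (↑(e i) : Sym2 V), v ∈ t),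
          H i ω / p i ω ∂μ
      = ((G.cliqueFinset 3).card : ℝ) := by
  have hHb : ∀ i ω, |H i ω| ≤ 1 := fun i ω => by rcases hH01 i ω with h | h <;> simp [h]
  have hpc : ∀ i, ∀ᵐ ω ∂μ, c ≤ p i ω := fun i => (hpb i).mono fun _ h => h.1
  have hH : ∀ i, Measurable (H i) := fun i => (hHmeas i).mono (ℱ.le _) le_rfl
  have hp : ∀ i, Measurable (p i) := fun i => (hpmeas i).mono (ℱ.le _) le_rfl
  rw [integral_finsetSum _ fun t _ => integrable_prod_div _ hc0 hH hp hHb hpc]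
  simp only [integral_prod_div_eq_one_s17 hc0 hHmeas hHb hpmeas hpc hcond, sum_const, nsmul_eq_mul,
    mul_one]

theorem stmt17 {Ω : Type*} {m0 : MeasurableSpace Ω} {μ : Measure Ω}
    [IsProbabilityMeasure μ] (ℱ : Filtration ℕ m0)
    (c : ℝ) (hc0 : 0 < c) (hc1 : c ≤ 1)
    {V : Type*} [Fintype V] [DecidableEq V]
    (G : SimpleGraph V) [DecidableRel G.Adj]
    (m : ℕ) (e : Fin m ≃ G.edgeSet)
    (H p : Fin m → Ω → ℝ)
    (hHmeas : ∀ i : Fin m, Measurable[ℱ (i.val + 1)] (H i))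
    (hH01 : ∀ (i : Fin m) (ω : Ω), H i ω = 0 ∨ H i ω = 1)
    (hpmeas : ∀ i : Fin m, Measurable[ℱ i.val] (p i))
    (hpb : ∀ i : Fin m, ∀ᵐ ω ∂μ, c ≤ p i ω ∧ p i ω ≤ 1)
    (hcond : ∀ i : Fin m, μ[H i | ℱ i.val] =ᵐ[μ] p i) :
    ∫ ω, ∑ t ∈ G.cliqueFinset 3,
        ∏ i ∈ Finset.univ.filter
          (fun i : Fin m => ∀ v ∈ (↑(e i) : Sym2 V), v ∈ t),
          H i ω / p i ω ∂μ
      = ((G.cliqueFinset 3).card : ℝ) :=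
  stmt17_general ℱ c hc0 G m e H p hHmeas hH01 hpmeas hpb hcond
end

section
/- Let G be a simple graph on a finite vertex type V with m edges, and let e : Fin m ≃ edges(G) be an enumeration of its edges (the arrival order). A connected path of length two is an unordered pair {i, j} of distinct edge indices whose corresponding edges share a vertex. Then the estimator N̂_Λ = ∑_{{i,j} path of length two} (H_i / p_i) · (H_j / p_j) is unbiased for the number N_Λ of connected paths of length two in G: E[N̂_Λ] = N_Λ. -/
open MeasureTheory Finset

/-! For `i < j` the weight `H i / p i` is `ℱ j`-measurable, so conditioning on `ℱ j` replaces
`H j` by `p j` and `E[(H i / p i) (H j / p j)] = E[H i / p i]`; conditioning on `ℱ i` in the same way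
gives `E[H i / p i] = 1`. Bounding `p` below by `c > 0` keeps every weight bounded, hence integrable,
and linearity of the integral turns the sum into the number of pairs. -/

theorem integral_mul_div_of_condExp_eq {Ω : Type*} {m m0 : MeasurableSpace Ω} {μ : Measure Ω}
    [IsFiniteMeasure μ] (hm : m ≤ m0) {f H p : Ω → ℝ} (hf : StronglyMeasurable[m] f)
    (hp : StronglyMeasurable[m] p) (hp0 : ∀ᵐ ω ∂μ, p ω ≠ 0) (hH : Integrable H μ)
    {C : ℝ} (hf_int : Integrable f μ) (hHp : ∀ᵐ ω ∂μ, |H ω / p ω| ≤ C)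
    (hcond : μ[H | m] =ᵐ[μ] p) :
    ∫ ω, f ω * (H ω / p ω) ∂μ = ∫ ω, f ω ∂μ := by
  have hfp : StronglyMeasurable[m] (f / p) := hf.div hp
  have hrw : (fun ω => f ω * (H ω / p ω)) = f / p * H := by
    funext ω; simp only [Pi.mul_apply, Pi.div_apply]; ring
  have hfH : Integrable (f / p * H) μ :=
    hrw ▸ hf_int.mul_bdd (hH.aestronglyMeasurable.div₀ (hp.mono hm).aestronglyMeasurable) hHp
  rw [hrw]
  calc ∫ ω, (f / p * H) ω ∂μ = ∫ ω, (μ[f / p * H | m]) ω ∂μ := (integral_condExp hm).symm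
    _ = ∫ ω, f ω ∂μ := by
      refine integral_congr_ae ?_
      filter_upwards [condExp_mul_of_stronglyMeasurable_left hfp hfH hH, hcond, hp0]
        with ω hpull hcondω hpω
      rw [hpull, Pi.mul_apply, hcondω, Pi.div_apply, div_mul_cancel₀ _ hpω]

theorem ae_abs_div_le_inv {Ω : Type*} {m0 : MeasurableSpace Ω} {μ : Measure Ω} {c : ℝ}
    {H p : Ω → ℝ} (hc0 : 0 < c) (hH : ∀ ω, |H ω| ≤ 1) (hp : ∀ᵐ ω ∂μ, c ≤ p ω) :
    ∀ᵐ ω ∂μ, |H ω / p ω| ≤ c⁻¹ := by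
  filter_upwards [hp] with ω hcp
  rw [abs_div, abs_of_pos (hc0.trans_le hcp), ← one_div]
  exact div_le_div₀ zero_le_one (hH ω) hc0 hcp

theorem stmt18_general {Ω : Type*} {m0 : MeasurableSpace Ω} {μ : Measure Ω}
    [IsProbabilityMeasure μ] (ℱ : Filtration ℕ m0)
    (c : ℝ) (hc0 : 0 < c)
    {V : Type*} [Fintype V] [DecidableEq V]
    (G : SimpleGraph V)
    (m : ℕ) (e : Fin m ≃ G.edgeSet)
    (H p : Fin m → Ω → ℝ)
    (hHmeas : ∀ i : Fin m, Measurable[ℱ (i.val + 1)] (H i))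
    (hH01 : ∀ (i : Fin m) (ω : Ω), H i ω = 0 ∨ H i ω = 1)
    (hpmeas : ∀ i : Fin m, Measurable[ℱ i.val] (p i))
    (hpb : ∀ i : Fin m, ∀ᵐ ω ∂μ, c ≤ p i ω ∧ p i ω ≤ 1)
    (hcond : ∀ i : Fin m, μ[H i | ℱ i.val] =ᵐ[μ] p i) :
    ∫ ω, ∑ q ∈ Finset.univ.filter
        (fun q : Fin m × Fin m => q.1 < q.2 ∧
          ∃ v : V, v ∈ (↑(e q.1) : Sym2 V) ∧ v ∈ (↑(e q.2) : Sym2 V)),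
        (H q.1 ω / p q.1 ω) * (H q.2 ω / p q.2 ω) ∂μ
      = ((Finset.univ.filter
        (fun q : Fin m × Fin m => q.1 < q.2 ∧
          ∃ v : V, v ∈ (↑(e q.1) : Sym2 V) ∧ v ∈ (↑(e q.2) : Sym2 V))).card : ℝ) := by
  have hH_le : ∀ i ω, |H i ω| ≤ 1 := fun i ω => by rcases hH01 i ω with h | h <;> simp [h]
  have hH_int : ∀ i, Integrable (H i) μ := fun i =>
    .of_bound ((hHmeas i).mono (ℱ.le _) le_rfl).aestronglyMeasurable 1 (.of_forall (hH_le i))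
  have hR_bdd : ∀ i, ∀ᵐ ω ∂μ, |H i ω / p i ω| ≤ c⁻¹ := fun i =>
    ae_abs_div_le_inv hc0 (hH_le i) ((hpb i).mono fun _ h => h.1)
  have hR_meas : ∀ i : Fin m, StronglyMeasurable[ℱ (i + 1)] fun ω => H i ω / p i ω := fun i =>
    ((hHmeas i).div ((hpmeas i).mono (ℱ.mono i.val.le_succ) le_rfl)).stronglyMeasurable
  have hR_int : ∀ i, Integrable (fun ω => H i ω / p i ω) μ := fun i =>
    .of_bound ((hR_meas i).mono (ℱ.le _)).aestronglyMeasurable c⁻¹ (hR_bdd i)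
  have hstep : ∀ (i : Fin m) (f : Ω → ℝ), StronglyMeasurable[ℱ i] f → Integrable f μ →
      ∫ ω, f ω * (H i ω / p i ω) ∂μ = ∫ ω, f ω ∂μ := fun i f hf hf_int =>
    integral_mul_div_of_condExp_eq (ℱ.le i) hf (hpmeas i).stronglyMeasurable
      ((hpb i).mono fun _ h => (hc0.trans_le h.1).ne') (hH_int i) hf_int (hR_bdd i) (hcond i)
  have hpair : ∀ i j : Fin m, i < j → ∫ ω, H i ω / p i ω * (H j ω / p j ω) ∂μ = 1 :=
    fun i j hij => by
      rw [hstep j _ ((hR_meas i).mono (ℱ.mono hij)) (hR_int i)]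
      simpa using hstep i (fun _ => 1) stronglyMeasurable_const (integrable_const 1)
  rw [integral_finsetSum _ fun q _ => (hR_int q.1).mul_bdd
      ((hR_meas q.2).mono (ℱ.le _)).aestronglyMeasurable (hR_bdd q.2),
    card_eq_sum_ones, Nat.cast_sum]
  exact sum_congr rfl fun q hq => (hpair q.1 q.2 (mem_filter.1 hq).2.1).trans Nat.cast_one.symm

theorem stmt18 {Ω : Type*} {m0 : MeasurableSpace Ω} {μ : Measure Ω}
    [IsProbabilityMeasure μ] (ℱ : Filtration ℕ m0)
    (c : ℝ) (hc0 : 0 < c) (hc1 : c ≤ 1)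
    {V : Type*} [Fintype V] [DecidableEq V]
    (G : SimpleGraph V) [DecidableRel G.Adj]
    (m : ℕ) (e : Fin m ≃ G.edgeSet)
    (H p : Fin m → Ω → ℝ)
    (hHmeas : ∀ i : Fin m, Measurable[ℱ (i.val + 1)] (H i))
    (hH01 : ∀ (i : Fin m) (ω : Ω), H i ω = 0 ∨ H i ω = 1)
    (hpmeas : ∀ i : Fin m, Measurable[ℱ i.val] (p i))
    (hpb : ∀ i : Fin m, ∀ᵐ ω ∂μ, c ≤ p i ω ∧ p i ω ≤ 1)
    (hcond : ∀ i : Fin m, μ[H i | ℱ i.val] =ᵐ[μ] p i) :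
    ∫ ω, ∑ q ∈ Finset.univ.filter
        (fun q : Fin m × Fin m => q.1 < q.2 ∧
          ∃ v : V, v ∈ (↑(e q.1) : Sym2 V) ∧ v ∈ (↑(e q.2) : Sym2 V)),
        (H q.1 ω / p q.1 ω) * (H q.2 ω / p q.2 ω) ∂μ
      = ((Finset.univ.filter
        (fun q : Fin m × Fin m => q.1 < q.2 ∧
          ∃ v : V, v ∈ (↑(e q.1) : Sym2 V) ∧ v ∈ (↑(e q.2) : Sym2 V))).card : ℝ) :=
  stmt18_general ℱ c hc0 G m e H p hHmeas hH01 hpmeas hpb hcond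
end
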